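/- Let H be a Hopf algebra with modular pair in involution (δ, σ), and define τ_n: H^{⊗n} → H^{⊗n} by τ_n(h₁⊗⋯⊗h_n) = S̃_δ(h₁)·(h₂⊗⋯⊗h_n⊗σ), where · denotes the diagonal action h·(h₁⊗⋯⊗h_n) = h⁽¹⁾h₁⊗⋯⊗h⁽ⁿ⁾h_n. Then for n = 1, τ₁^{2} = id on H. -/

import Mathlib

open TensorProduct

/-- The `δ`-twisted antipode `S̃_δ(h) = δ(h⁽¹⁾) S(h⁽²⁾)` of a Hopf algebra. -/
noncomputable def twistedAntipode (k : Type*) {H : Type*} [Field k] [Ring H]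
    [HopfAlgebra k H] (δ : H →ₐ[k] k) : H →ₗ[k] H :=
  HopfAlgebra.antipode (R := k) ∘ₗ (TensorProduct.lid k H).toLinearMap ∘ₗ
    TensorProduct.map δ.toLinearMap LinearMap.id ∘ₗ Coalgebra.comul

section Aux

open Coalgebra HopfAlgebra

variable {k H : Type*} [Field k] [Ring H] [HopfAlgebra k H]

lemma tA_apply (δ : H →ₐ[k] k) (a : H) {ι : Type*} (r : Repr k a ι) :
    twistedAntipode k δ a = ∑ i ∈ r.index, δ (r.left i) • antipode (R := k) (r.right i) := by
  simp only [twistedAntipode, LinearMap.comp_apply, ← r.eq, map_sum]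
  simp

/-- Repr of `a * σ` for grouplike σ, from a Repr of `a`. -/
def mulRepr (σ : H) (hσ_comul : Coalgebra.comul (R := k) σ = σ ⊗ₜ[k] σ)
    {a : H} {ι : Type*} (r : Repr k a ι) : Repr k (a * σ) ι where
  index := r.index
  left i := r.left i * σ
  right i := r.right i * σ
  eq := by
    rw [Bialgebra.comul_mul, hσ_comul, ← r.eq, Finset.sum_mul]
    simp [Algebra.TensorProduct.tmul_mul_tmul]

lemma star_lemma (σ σinv : H) (hσ_comul : Coalgebra.comul (R := k) σ = σ ⊗ₜ[k] σ)
    (hσ_counit : Coalgebra.counit (R := k) σ = (1 : k))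
    (hσinv₁ : σ * σinv = 1)
    {a : H} {ι : Type*} (r : Repr k a ι) :
    ∑ i ∈ r.index, antipode (R := k) (r.left i * σ) * r.right i
      = counit (R := k) a • σinv := by
  have h1 := sum_antipode_mul_eq_algebraMap_counit (R := k) (mulRepr σ hσ_comul r)
  simp only [mulRepr, Bialgebra.counit_mul, hσ_counit, mul_one] at h1
  have h2 : (∑ i ∈ r.index, antipode (R := k) (r.left i * σ) * r.right i) * σ
      = algebraMap k H (counit (R := k) a) := by
    rw [Finset.sum_mul]; simpa [mul_assoc] using h1
  calc ∑ i ∈ r.index, antipode (R := k) (r.left i * σ) * r.right i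
      = (∑ i ∈ r.index, antipode (R := k) (r.left i * σ) * r.right i) * (σ * σinv) := by
        rw [hσinv₁, mul_one]
    _ = algebraMap k H (counit (R := k) a) * σinv := by rw [← mul_assoc, h2]
    _ = counit (R := k) a • σinv := by rw [Algebra.smul_def]

lemma antipode_mul_grouplike (σ σinv : H)
    (hσ_comul : Coalgebra.comul (R := k) σ = σ ⊗ₜ[k] σ)
    (hσ_counit : Coalgebra.counit (R := k) σ = (1 : k))
    (hσinv₁ : σ * σinv = 1) (h : H) :
    antipode (R := k) (h * σ) = σinv * antipode (R := k) h := by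
  set r : Repr k h (H × H) := ℛ k h with hr
  have key := sum_tmul_tmul_eq (R := k) r (fun i => ℛ k (r.left i)) (fun i => ℛ k (r.right i))
  -- the trilinear evaluation map  x ⊗ (y ⊗ z) ↦ S(xσ) * (y * S(z))
  set T : H ⊗[k] (H ⊗[k] H) →ₗ[k] H :=
    LinearMap.mul' k H ∘ₗ TensorProduct.map
      ((antipode (R := k)) ∘ₗ LinearMap.mulRight k σ)
      (LinearMap.mul' k H ∘ₗ TensorProduct.map LinearMap.id (antipode (R := k))) with hT
  have hTapp : ∀ x y z : H, T (x ⊗ₜ[k] (y ⊗ₜ[k] z))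
      = antipode (R := k) (x * σ) * (y * antipode (R := k) z) := by
    intro x y z; simp [hT]
  have := congrArg T key
  simp only [map_sum, hTapp] at this
  -- compute the left side of `this`
  have hL : ∀ i ∈ r.index,
      ∑ j ∈ (ℛ k (r.left i)).index,
        antipode (R := k) ((ℛ k (r.left i)).left j * σ) *
          ((ℛ k (r.left i)).right j * antipode (R := k) (r.right i))
      = counit (R := k) (r.left i) • (σinv * antipode (R := k) (r.right i)) := by
    intro i _
    have := star_lemma σ σinv hσ_comul hσ_counit hσinv₁ (ℛ k (r.left i))
    calc ∑ j ∈ (ℛ k (r.left i)).index,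
          antipode (R := k) ((ℛ k (r.left i)).left j * σ) *
            ((ℛ k (r.left i)).right j * antipode (R := k) (r.right i))
        = (∑ j ∈ (ℛ k (r.left i)).index,
            antipode (R := k) ((ℛ k (r.left i)).left j * σ) *
              (ℛ k (r.left i)).right j) * antipode (R := k) (r.right i) := by
          rw [Finset.sum_mul]; simp [mul_assoc]
      _ = _ := by rw [this, smul_mul_assoc]
  have hR : ∀ i ∈ r.index,
      ∑ j ∈ (ℛ k (r.right i)).index,
        antipode (R := k) (r.left i * σ) *
          ((ℛ k (r.right i)).left j * antipode (R := k) ((ℛ k (r.right i)).right j))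
      = counit (R := k) (r.right i) • antipode (R := k) (r.left i * σ) := by
    intro i _
    rw [← Finset.mul_sum, sum_mul_antipode_eq_algebraMap_counit (R := k) (ℛ k (r.right i)),
      ← Algebra.commutes, Algebra.smul_def]
  rw [Finset.sum_congr rfl hL, Finset.sum_congr rfl hR] at this
  -- now use counit identities
  have hsum1 : ∑ i ∈ r.index, counit (R := k) (r.left i) • r.right i = h := by
    have h0 := congrArg (TensorProduct.lid k H) (sum_counit_tmul_eq (R := k) r)
    simpa only [map_sum, TensorProduct.lid_tmul, one_smul] using h0
  have hsum2 : ∑ i ∈ r.index, counit (R := k) (r.right i) • r.left i = h := by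
    have h0 := congrArg (TensorProduct.rid k H) (sum_tmul_counit_eq (R := k) r)
    simpa only [map_sum, TensorProduct.rid_tmul, one_smul] using h0
  have e2 := congrArg ((antipode (R := k)) ∘ₗ LinearMap.mulRight k σ) hsum2
  simp only [map_sum, LinearMap.map_smul, LinearMap.comp_apply, LinearMap.mulRight_apply] at e2
  have e1 := congrArg ((LinearMap.mulLeft k σinv) ∘ₗ (antipode (R := k))) hsum1
  simp only [map_sum, LinearMap.map_smul, LinearMap.comp_apply, LinearMap.mulLeft_apply] at e1
  rw [← e2, ← this, e1]


lemma twistedAntipode_mul_grouplike (δ : H →ₐ[k] k) (σ σinv : H)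
    (hσ_comul : Coalgebra.comul (R := k) σ = σ ⊗ₜ[k] σ)
    (hσ_counit : Coalgebra.counit (R := k) σ = (1 : k))
    (hσinv₁ : σ * σinv = 1) (hmodular : δ σ = 1) (h : H) :
    twistedAntipode k δ (h * σ) = σinv * twistedAntipode k δ h := by
  set r : Repr k h (H × H) := ℛ k h with hr
  rw [tA_apply δ (h * σ) (mulRepr σ hσ_comul r), tA_apply δ h r, Finset.mul_sum]
  simp only [mulRepr, map_mul, hmodular, mul_one,
    antipode_mul_grouplike σ σinv hσ_comul hσ_counit hσinv₁, mul_smul_comm]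

end Aux

/-- for a modular pair in involution `(δ, σ)`, the cyclic operator
`τ₁(h) = S̃_δ(h) σ` (the `n = 1` case of `τ_n(h₁⊗⋯⊗h_n) = S̃_δ(h₁)·(h₂⊗⋯⊗h_n⊗σ)`)
satisfies `τ₁² = id` on `H`. -/
theorem tau_one_squared_eq_id (k : Type*) {H : Type*} [Field k] [Ring H]
    [HopfAlgebra k H] (δ : H →ₐ[k] k) (σ σinv : H)
    (hσ_comul : Coalgebra.comul (R := k) σ = σ ⊗ₜ[k] σ)
    (hσ_counit : Coalgebra.counit (R := k) σ = (1 : k))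
    (hσinv₁ : σ * σinv = 1) (hσinv₂ : σinv * σ = 1)
    (hmodular : δ σ = 1)
    (hinvolution : ∀ h : H, twistedAntipode k δ (twistedAntipode k δ h) = σ * h * σinv) :
    ∀ h : H, twistedAntipode k δ (twistedAntipode k δ h * σ) * σ = h := by
  intro h
  rw [twistedAntipode_mul_grouplike δ σ σinv hσ_comul hσ_counit hσinv₁ hmodular,
    hinvolution h]
  calc σinv * (σ * h * σinv) * σ
      = (σinv * σ) * h * (σinv * σ) := by
        simp only [mul_assoc]
    _ = h := by rw [hσinv₂, one_mul, mul_one]
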